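/- For every integer n ≥ 5 and every i ∈ ℤ/nℤ, the group homomorphism from the Baumslag–Solitar group BS(1,2) to the generalised Higman group H_n determined by a ↦ a_i and b ↦ a_{i+1} is well defined (the relator a b a⁻¹ b⁻² is sent to the identity) and injective; in particular, the subgroup of H_n generated by a_i and a_{i+1} is isomorphic to BS(1,2). -/

import Mathlib

def higmanRels (n : ℕ) : Set (FreeGroup (ZMod n)) :=
  {r | ∃ i : ZMod n,
    r = FreeGroup.of i * FreeGroup.of (i + 1) * (FreeGroup.of i)⁻¹ * ((FreeGroup.of (i + 1))⁻¹) ^ 2}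

abbrev HigmanGroup (n : ℕ) : Type := PresentedGroup (higmanRels n)

def bsRels : Set (FreeGroup (Fin 2)) :=
  {FreeGroup.of 0 * FreeGroup.of 1 * (FreeGroup.of 0)⁻¹ * ((FreeGroup.of 1)⁻¹) ^ 2}

abbrev BS12 : Type := PresentedGroup bsRels

/-!
`Hₙ` maps to a cycle of `n` copies of `BS(1,2)`, built as Higman did: two chains of copies, one
of two copies (vertices `0, 1, 2`) and one of `n - 2` copies (vertices `2, …, n ≡ 0`), amalgamated
along the free group on their two shared end vertices. A chain grows by amalgamating one new copy
over `ℤ`, its `a` glued to the last vertex. By induction the end vertices of a chain have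
independent powers, and once the chain has two copies they generate a free group of rank two
(ping-pong on normal forms in the last amalgam); so both chains embed in the cycle. The first copy
of `BS(1,2)` embeds in its chain, and the composite `BS(1,2) → Hₙ → cycle` is that embedding.
-/

universe u

open Function Monoid Subgroup

section Relations

variable {G H : Type*} [Group G] [Group H]

def BSRel (u v : G) : Prop := u * v * u⁻¹ = v ^ 2

theorem relator_eq_one_iff_bsRel {u v : G} : u * v * u⁻¹ * v⁻¹ ^ 2 = 1 ↔ BSRel u v := by
  rw [inv_pow, mul_inv_eq_one, BSRel]

theorem BSRel.map {u v : G} (h : BSRel u v) (φ : G →* H) : BSRel (φ u) (φ v) := by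
  rw [BSRel, ← map_inv, ← map_mul, ← map_mul, h, map_pow]

def IndepZPowers (g h : G) : Prop := ∀ m n : ℤ, g ^ m = h ^ n → m = 0 ∧ n = 0

theorem IndepZPowers.eq_zero_of_zpow_mem_right {g h : G} (hgh : IndepZPowers g h) {m : ℤ}
    (hm : g ^ m ∈ zpowers h) : m = 0 := by
  obtain ⟨n, hn⟩ := mem_zpowers_iff.1 hm
  exact (hgh m n hn.symm).1

theorem IndepZPowers.eq_zero_of_zpow_mem_left {g h : G} (hgh : IndepZPowers g h) {n : ℤ}
    (hn : h ^ n ∈ zpowers g) : n = 0 := by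
  obtain ⟨m, hm⟩ := mem_zpowers_iff.1 hn
  exact (hgh m n hm).2

theorem IndepZPowers.injective_zpowersHom_left {g h : G} (hgh : IndepZPowers g h) :
    Injective (zpowersHom G g) := by
  refine (injective_iff_map_eq_one _).2 fun k hk => ?_
  rw [zpowersHom_apply, ← zpow_zero h] at hk
  simpa using (hgh _ _ hk).1

theorem IndepZPowers.injective_zpowersHom_right {g h : G} (hgh : IndepZPowers g h) :
    Injective (zpowersHom G h) := by
  refine (injective_iff_map_eq_one _).2 fun k hk => ?_
  rw [zpowersHom_apply, ← zpow_zero g] at hk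
  simpa using (hgh _ _ hk.symm).2

end Relations

theorem FreeGroup.injective_lift_swap {G : Type*} [Group G] {x y : G}
    (h : Injective (FreeGroup.lift ![x, y])) : Injective (FreeGroup.lift ![y, x]) := by
  have hswap : FreeGroup.lift ![y, x] =
      (FreeGroup.lift ![x, y]).comp (FreeGroup.freeGroupCongr (Equiv.swap 0 1)).toMonoidHom := by
    ext j
    fin_cases j <;> simp
  rw [hswap, MonoidHom.coe_comp]
  exact h.comp (MulEquiv.injective _)

theorem Equiv.addLeft_zpow {A : Type*} [AddGroup A] (c : A) (m : ℤ) :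
    Equiv.addLeft c ^ m = Equiv.addLeft (m • c) :=
  (map_zsmul (AddAction.toPermHom A A) m c).symm

namespace BS12

def a : BS12 := PresentedGroup.of 0

def b : BS12 := PresentedGroup.of 1

theorem bsRel_a_b : BSRel a b :=
  relator_eq_one_iff_bsRel.1 (PresentedGroup.one_of_mem rfl)

variable {G : Type*} [Group G]

def lift (u v : G) (h : BSRel u v) : BS12 →* G :=
  PresentedGroup.toGroup (f := ![u, v]) <| by
    rintro r rfl
    simpa using relator_eq_one_iff_bsRel.2 h

@[simp] theorem lift_a (u v : G) (h : BSRel u v) : lift u v h a = u :=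
  PresentedGroup.toGroup.of _

@[simp] theorem lift_b (u v : G) (h : BSRel u v) : lift u v h b = v :=
  PresentedGroup.toGroup.of _

theorem hom_ext {φ ψ : BS12 →* G} (ha : φ a = ψ a) (hb : φ b = ψ b) : φ = ψ :=
  PresentedGroup.ext fun j => by fin_cases j; exacts [ha, hb]

theorem range_lift (u v : G) (h : BSRel u v) : (lift u v h).range = closure {u, v} := by
  have hgen : Set.range (PresentedGroup.of (rels := bsRels)) = {a, b} := by
    ext z
    constructor
    · rintro ⟨j, rfl⟩
      fin_cases j
      exacts [Or.inl rfl, Or.inr rfl]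
    · rintro (rfl | rfl)
      exacts [⟨0, rfl⟩, ⟨1, rfl⟩]
  rw [MonoidHom.range_eq_map, ← PresentedGroup.closure_range_of, hgen, MonoidHom.map_closure,
    Set.image_pair, lift_a, lift_b]

def affineRep : BS12 →* Equiv.Perm ℚ :=
  lift (Equiv.mulLeft₀ 2 two_ne_zero) (Equiv.addLeft 1) <| show BSRel _ _ by
    ext x
    simp only [Equiv.Perm.mul_apply, Equiv.Perm.coe_inv, Equiv.mulLeft₀_symm_apply,
      Equiv.coe_addLeft, Equiv.mulLeft₀_apply, pow_two]
    ring

def expSumA : BS12 →* Multiplicative ℤ :=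
  lift (Multiplicative.ofAdd 1) 1 (show BSRel _ _ by simp [BSRel])

theorem indepZPowers_a_b : IndepZPowers a b := by
  -- the exponent sum of `a` forces `m = 0`, and `b` acts on `ℚ` as a translation
  intro m n h
  have hm := congrArg expSumA h
  simp only [expSumA, map_zpow, lift_a, lift_b, one_zpow, ← ofAdd_zsmul, Int.zsmul_eq_mul,
    mul_one, ofAdd_eq_one] at hm
  subst hm
  refine ⟨rfl, ?_⟩
  have h0 := congrArg (fun g => affineRep g 0) h
  simpa [affineRep, Equiv.addLeft_zpow, eq_comm] using h0

end BS12

theorem ZMod.apply_val_natCast_of_le {n : ℕ} {α : Type*} {x : ℕ → α} (hper : x n = x 0)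
    {m : ℕ} (hm : m ≤ n) : x (m : ZMod n).val = x m := by
  rcases hm.lt_or_eq with hm | rfl
  · rw [ZMod.val_cast_of_lt hm]
  · rw [ZMod.natCast_self, ZMod.val_zero, hper]

namespace HigmanGroup

variable {n : ℕ} {G : Type*} [Group G]

theorem bsRel_of (v : ZMod n) :
    BSRel (PresentedGroup.of (rels := higmanRels n) v) (PresentedGroup.of (v + 1)) :=
  relator_eq_one_iff_bsRel.1 (PresentedGroup.one_of_mem ⟨v, rfl⟩)

variable [NeZero n]

/-- The homomorphism `Hₙ → G` sending `aᵢ₊ₘ` to `x m`, for a closed path `x 0, …, x n = x 0`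
of `BS(1,2)`-relations in `G`. -/
def lift (x : ℕ → G) (hx : ∀ m < n, BSRel (x m) (x (m + 1))) (hper : x n = x 0)
    (i : ZMod n) : HigmanGroup n →* G :=
  PresentedGroup.toGroup (f := fun v => x (v - i).val) <| by
    rintro r ⟨v, rfl⟩
    obtain ⟨m, hm, rfl⟩ : ∃ m < n, v = i + m :=
      ⟨(v - i).val, ZMod.val_lt _, by rw [ZMod.natCast_zmod_val, add_sub_cancel]⟩
    rw [show i + m + 1 = i + ((m + 1 : ℕ) : ZMod n) by push_cast; ring]
    simp only [map_mul, map_inv, map_pow, FreeGroup.lift_apply_of]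
    rw [add_sub_cancel_left, add_sub_cancel_left, ZMod.apply_val_natCast_of_le hper hm.le,
      ZMod.apply_val_natCast_of_le hper hm]
    exact relator_eq_one_iff_bsRel.2 (hx m hm)

theorem lift_of_add {x : ℕ → G} (hx : ∀ m < n, BSRel (x m) (x (m + 1)))
    (hper : x n = x 0) (i : ZMod n) {m : ℕ} (hm : m ≤ n) :
    lift x hx hper i (PresentedGroup.of (i + m)) = x m := by
  rw [lift, PresentedGroup.toGroup.of, add_sub_cancel_left, ZMod.apply_val_natCast_of_le hper hm]

end HigmanGroup

theorem Monoid.PushoutI.NormalWord.fstIdx_of_smul {ι : Type*} {G : ι → Type*} {H : Type*}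
    [∀ i, Group (G i)] [Group H] {φ : ∀ i, H →* G i} {d : Transversal φ} [DecidableEq ι]
    [∀ i, DecidableEq (G i)] {i : ι} {g : G i} (hg : g ∉ (φ i).range) {w : NormalWord d}
    (hw : w.fstIdx ≠ some i) : (PushoutI.of (φ := φ) i g • w).fstIdx = some i := by
  rw [← cons_eq_smul g w hw hg]
  rfl

namespace Amalgam

variable {B : Type*} {X Y : Type u} [Group B] [Group X] [Group Y]

def factor (X Y : Type u) : Bool → Type u := fun s => bif s then Y else X

instance instGroupFactor : ∀ s, Group (factor X Y s)
  | false => ‹Group X›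
  | true => ‹Group Y›

def legs (f : B →* X) (g : B →* Y) : ∀ s, B →* factor X Y s
  | false => f
  | true => g

theorem legs_injective {f : B →* X} {g : B →* Y} (hf : Injective f) (hg : Injective g) :
    ∀ s, Injective (legs f g s)
  | false => hf
  | true => hg

end Amalgam

abbrev Amalgam {B : Type*} {X Y : Type u} [Group B] [Group X] [Group Y]
    (f : B →* X) (g : B →* Y) : Type _ :=
  PushoutI (Amalgam.legs f g)

namespace Amalgam

variable {B : Type*} {X Y : Type u} [Group B] [Group X] [Group Y] (f : B →* X) (g : B →* Y)

def inl : X →* Amalgam f g := PushoutI.of (φ := legs f g) false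

def inr : Y →* Amalgam f g := PushoutI.of (φ := legs f g) true

variable {f g}

theorem inl_eq_inr_of_eq {x : X} {y : Y} (z : B) (hx : f z = x) (hy : g z = y) :
    inl f g x = inr f g y := by
  rw [← hx, ← hy]
  exact (PushoutI.of_apply_eq_base (legs f g) false z).trans
    (PushoutI.of_apply_eq_base (legs f g) true z).symm

variable (hf : Injective f) (hg : Injective g)
include hf hg

theorem inl_injective : Injective (inl f g) :=
  PushoutI.of_injective (legs_injective hf hg) false

theorem inr_injective : Injective (inr f g) :=
  PushoutI.of_injective (legs_injective hf hg) true

theorem exists_eq_of_inl_eq_inr {x : X} {y : Y} (h : inl f g x = inr f g y) :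
    ∃ z : B, x = f z ∧ y = g z := by
  have hmem : inl f g x ∈ (PushoutI.of (φ := legs f g) false).range ⊓
      (PushoutI.of (φ := legs f g) true).range := ⟨⟨x, rfl⟩, ⟨y, h.symm⟩⟩
  rw [PushoutI.inf_of_range_eq_base_range (legs_injective hf hg) Bool.false_ne_true] at hmem
  obtain ⟨z, hz⟩ := hmem
  refine ⟨z, inl_injective hf hg ?_, inr_injective hf hg ?_⟩
  · rw [← hz]
    exact (PushoutI.of_apply_eq_base (legs f g) false z).symm
  · rw [← h, ← hz]
    exact (PushoutI.of_apply_eq_base (legs f g) true z).symm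

theorem indepZPowers_inl_inr {x : X} {y : Y} (hx : ∀ m : ℤ, x ^ m ∈ f.range → m = 0)
    (hy : ∀ n : ℤ, y ^ n ∈ g.range → n = 0) : IndepZPowers (inl f g x) (inr f g y) := by
  intro m n h
  rw [← map_zpow, ← map_zpow] at h
  obtain ⟨z, hxz, hyz⟩ := exists_eq_of_inl_eq_inr hf hg h
  exact ⟨hx m ⟨z, hxz.symm⟩, hy n ⟨z, hyz.symm⟩⟩

theorem injective_freeGroupLift_inl_inr {x : X} {y : Y} (hx : ∀ m : ℤ, x ^ m ∈ f.range → m = 0)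
    (hy : ∀ n : ℤ, y ^ n ∈ g.range → n = 0) :
    Injective (FreeGroup.lift ![inl f g x, inr f g y]) := by
  classical
  obtain ⟨d⟩ := PushoutI.NormalWord.transversal_nonempty (legs f g) (legs_injective hf hg)
  set c : Fin 2 → Amalgam f g := ![inl f g x, inr f g y]
  let side : Fin 2 → Bool := ![false, true]
  have hside : Injective side := by decide
  have hc : ∀ j (m : ℤ), m ≠ 0 → ∀ w : PushoutI.NormalWord d, w.fstIdx ≠ some (side j) →
      (c j ^ m • w).fstIdx = some (side j) := by
    intro j m hm w hw
    fin_cases j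
    · exact map_zpow (inl f g) x m ▸
        PushoutI.NormalWord.fstIdx_of_smul (fun hmem => hm (hx m hmem)) hw
    · exact map_zpow (inr f g) y m ▸
        PushoutI.NormalWord.fstIdx_of_smul (fun hmem => hm (hy m hmem)) hw
  have hlift : FreeGroup.lift c = (CoprodI.lift fun j => FreeGroup.lift fun _ => c j).comp
      freeGroupEquivCoprodI.toMonoidHom := by
    ext j
    simp
  rw [hlift, MonoidHom.coe_comp]
  refine Injective.comp ?_ (MulEquiv.injective _)
  -- ping-pong sets: the normal words whose first letter lies in the factor of `c j`
  refine CoprodI.lift_injective_of_ping_pong _ ?_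
    (fun j => {w : PushoutI.NormalWord d | w.fstIdx = some (side j)}) (fun j => ?_) ?_ ?_
  · exact Or.inr ⟨0, (Cardinal.natCast_lt_aleph0 (n := 3)).le.trans (Cardinal.aleph0_le_mk _)⟩
  · exact ⟨c j ^ (1 : ℤ) • PushoutI.NormalWord.empty, hc j 1 one_ne_zero _ nofun⟩
  · intro i j hij
    exact Set.disjoint_left.2 fun w hwi hwj =>
      hij (hside (Option.some_injective _ (hwi.symm.trans hwj)))
  · rintro i j hij h hne _ ⟨w, hw, rfl⟩
    obtain ⟨m, rfl⟩ : ∃ m : ℤ, FreeGroup.of () ^ m = h :=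
      ⟨FreeGroup.freeGroupUnitEquivInt h, FreeGroup.freeGroupUnitEquivInt.left_inv h⟩
    rw [map_zpow, FreeGroup.lift_apply_of]
    refine hc i m (fun hm => hne (by rw [hm, zpow_zero])) w ?_
    rw [show w.fstIdx = some (side j) from hw]
    exact fun h => hij.symm (hside (Option.some_injective _ h))

end Amalgam

structure MarkedGroup where
  carrier : Type
  [instGroup : Group carrier]
  vertex : ℕ → carrier

attribute [instance] MarkedGroup.instGroup

namespace MarkedGroup

variable (P : MarkedGroup) (k : ℕ)

/-- Glue a copy of `BS(1,2)` to `P`, identifying `a` with the `k`-th vertex; its `b` becomes the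
vertex `k + 1` (and, as a junk value, every later vertex). -/
def attach : MarkedGroup where
  carrier := Amalgam (zpowersHom P.carrier (P.vertex k)) (zpowersHom BS12 BS12.a)
  vertex j := if j ≤ k then Amalgam.inl _ _ (P.vertex j) else Amalgam.inr _ _ BS12.b

def inl : P.carrier →* (P.attach k).carrier := Amalgam.inl _ _

def inr : BS12 →* (P.attach k).carrier := Amalgam.inr _ _

variable {P k}

theorem attach_vertex_of_le {j : ℕ} (hj : j ≤ k) : (P.attach k).vertex j = P.inl k (P.vertex j) :=
  if_pos hj

theorem attach_vertex_of_lt {j : ℕ} (hj : k < j) : (P.attach k).vertex j = P.inr k BS12.b :=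
  if_neg (by omega)

theorem attach_vertex_self : (P.attach k).vertex k = P.inr k BS12.a :=
  (attach_vertex_of_le le_rfl).trans <|
    Amalgam.inl_eq_inr_of_eq (Multiplicative.ofAdd 1) (by simp) (by simp)

theorem bsRel_attach_vertex (h : ∀ j < k, BSRel (P.vertex j) (P.vertex (j + 1))) :
    ∀ j ≤ k, BSRel ((P.attach k).vertex j) ((P.attach k).vertex (j + 1)) := by
  intro j hj
  rcases hj.lt_or_eq with hj | rfl
  · rw [attach_vertex_of_le hj.le, attach_vertex_of_le hj]
    exact (h j hj).map _
  · rw [attach_vertex_self, attach_vertex_of_lt j.lt_succ_self]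
    exact BS12.bsRel_a_b.map _

theorem inl_injective (h : Injective (zpowersHom P.carrier (P.vertex k))) : Injective (P.inl k) :=
  Amalgam.inl_injective h BS12.indepZPowers_a_b.injective_zpowersHom_left

theorem injective_bs12Lift_attach (hk : 1 ≤ k)
    (hP : Injective (zpowersHom P.carrier (P.vertex k))) {h : BSRel (P.vertex 0) (P.vertex 1)}
    (hinj : Injective (BS12.lift _ _ h))
    (h' : BSRel ((P.attach k).vertex 0) ((P.attach k).vertex 1)) :
    Injective (BS12.lift _ _ h') := by
  have hcomp : BS12.lift _ _ h' = (P.inl k).comp (BS12.lift _ _ h) :=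
    BS12.hom_ext (by simpa using attach_vertex_of_le k.zero_le)
      (by simpa using attach_vertex_of_le hk)
  rw [hcomp, MonoidHom.coe_comp]
  exact (inl_injective hP).comp hinj

section Independent

variable (hP : IndepZPowers (P.vertex 0) (P.vertex k))
include hP

theorem indepZPowers_attach_vertex :
    IndepZPowers ((P.attach k).vertex 0) ((P.attach k).vertex (k + 1)) := by
  rw [attach_vertex_of_le k.zero_le, attach_vertex_of_lt k.lt_succ_self]
  exact Amalgam.indepZPowers_inl_inr hP.injective_zpowersHom_right
    BS12.indepZPowers_a_b.injective_zpowersHom_left (fun _ => hP.eq_zero_of_zpow_mem_right)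
    (fun _ => BS12.indepZPowers_a_b.eq_zero_of_zpow_mem_left)

theorem injective_freeGroupLift_attach :
    Injective (FreeGroup.lift ![(P.attach k).vertex 0, (P.attach k).vertex (k + 1)]) := by
  rw [attach_vertex_of_le k.zero_le, attach_vertex_of_lt k.lt_succ_self]
  exact Amalgam.injective_freeGroupLift_inl_inr hP.injective_zpowersHom_right
    BS12.indepZPowers_a_b.injective_zpowersHom_left (fun _ => hP.eq_zero_of_zpow_mem_right)
    (fun _ => BS12.indepZPowers_a_b.eq_zero_of_zpow_mem_left)

end Independent

end MarkedGroup

/-- `k + 1` copies of `BS(1,2)` glued in a row, the `b` of each copy to the `a` of the next. -/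
def bsChain : ℕ → MarkedGroup
  | 0 => ⟨BS12, fun j => if j = 0 then BS12.a else BS12.b⟩
  | k + 1 => (bsChain k).attach (k + 1)

namespace bsChain

theorem bsRel_vertex : ∀ k, ∀ j ≤ k, BSRel ((bsChain k).vertex j) ((bsChain k).vertex (j + 1))
  | 0, 0, _ => BS12.bsRel_a_b
  | k + 1, j, hj =>
    MarkedGroup.bsRel_attach_vertex (fun j hj => bsRel_vertex k j (Nat.le_of_lt_succ hj)) j hj

theorem indepZPowers_vertex :
    ∀ k, IndepZPowers ((bsChain k).vertex 0) ((bsChain k).vertex (k + 1))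
  | 0 => BS12.indepZPowers_a_b
  | k + 1 => MarkedGroup.indepZPowers_attach_vertex (indepZPowers_vertex k)

theorem injective_freeGroupLift_vertex {k : ℕ} (hk : 1 ≤ k) :
    Injective (FreeGroup.lift ![(bsChain k).vertex 0, (bsChain k).vertex (k + 1)]) := by
  obtain ⟨k, rfl⟩ := Nat.exists_eq_add_of_le' hk
  exact MarkedGroup.injective_freeGroupLift_attach (indepZPowers_vertex k)

theorem injective_bs12Lift_vertex :
    ∀ k, Injective (BS12.lift _ _ (bsRel_vertex k 0 k.zero_le))
  | 0 => by
    rw [show BS12.lift _ _ (bsRel_vertex 0 0 le_rfl) = MonoidHom.id BS12 from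
      BS12.hom_ext (BS12.lift_a _ _ _) (BS12.lift_b _ _ _)]
    exact injective_id
  | k + 1 => MarkedGroup.injective_bs12Lift_attach (Nat.succ_le_succ k.zero_le)
      (indepZPowers_vertex k).injective_zpowersHom_right (injective_bs12Lift_vertex k) _

end bsChain

section BSCycle

variable (p q : ℕ)

def bsCycleLegLeft : FreeGroup (Fin 2) →* (bsChain p).carrier :=
  FreeGroup.lift ![(bsChain p).vertex 0, (bsChain p).vertex (p + 1)]

def bsCycleLegRight : FreeGroup (Fin 2) →* (bsChain q).carrier :=
  FreeGroup.lift ![(bsChain q).vertex (q + 1), (bsChain q).vertex 0]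

/-- The chains `bsChain p` and `bsChain q` glued end to end into a cycle of `p + q + 2` copies
of `BS(1,2)`. -/
abbrev bsCycle : Type := Amalgam (bsCycleLegLeft p) (bsCycleLegRight q)

namespace bsCycle

def inl : (bsChain p).carrier →* bsCycle p q := Amalgam.inl _ _

def inr : (bsChain q).carrier →* bsCycle p q := Amalgam.inr _ _

def vertex (m : ℕ) : bsCycle p q :=
  if m ≤ p + 1 then inl p q ((bsChain p).vertex m) else inr p q ((bsChain q).vertex (m - (p + 1)))

variable {p q}

theorem inl_vertex_zero :
    inl p q ((bsChain p).vertex 0) = inr p q ((bsChain q).vertex (q + 1)) :=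
  Amalgam.inl_eq_inr_of_eq (FreeGroup.of 0) (by simp [bsCycleLegLeft])
    (by simp [bsCycleLegRight])

theorem inl_vertex_last :
    inl p q ((bsChain p).vertex (p + 1)) = inr p q ((bsChain q).vertex 0) :=
  Amalgam.inl_eq_inr_of_eq (FreeGroup.of 1) (by simp [bsCycleLegLeft])
    (by simp [bsCycleLegRight])

theorem vertex_of_le {m : ℕ} (hm : m ≤ p + 1) : vertex p q m = inl p q ((bsChain p).vertex m) :=
  if_pos hm

theorem vertex_of_ge {m : ℕ} (hm : p + 1 ≤ m) :
    vertex p q m = inr p q ((bsChain q).vertex (m - (p + 1))) := by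
  rcases hm.lt_or_eq with hm | rfl
  · exact if_neg (by omega)
  · rw [vertex_of_le le_rfl, inl_vertex_last, Nat.sub_self]

theorem bsRel_vertex (m : ℕ) (hm : m < p + q + 2) : BSRel (vertex p q m) (vertex p q (m + 1)) := by
  rcases Nat.lt_or_ge m (p + 1) with hmp | hmp
  · rw [vertex_of_le hmp.le, vertex_of_le hmp]
    exact (bsChain.bsRel_vertex p m (by omega)).map _
  · rw [vertex_of_ge hmp, vertex_of_ge (by omega), Nat.sub_add_comm hmp]
    exact (bsChain.bsRel_vertex q _ (by omega)).map _

theorem vertex_period : vertex p q (p + q + 2) = vertex p q 0 := by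
  rw [vertex_of_ge (by omega), vertex_of_le (by omega), inl_vertex_zero]
  congr 3
  omega

theorem inl_injective (hp : 1 ≤ p) (hq : 1 ≤ q) : Injective (inl p q) :=
  Amalgam.inl_injective (bsChain.injective_freeGroupLift_vertex hp)
    (FreeGroup.injective_lift_swap (bsChain.injective_freeGroupLift_vertex hq))

def ofHigman (i : ZMod (p + q + 2)) : HigmanGroup (p + q + 2) →* bsCycle p q :=
  HigmanGroup.lift (vertex p q) bsRel_vertex vertex_period i

theorem ofHigman_of_add (i : ZMod (p + q + 2)) {m : ℕ} (hm : m ≤ p + 1) :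
    ofHigman i (PresentedGroup.of (i + m)) = inl p q ((bsChain p).vertex m) := by
  rw [ofHigman, HigmanGroup.lift_of_add _ _ _ (by omega), vertex_of_le hm]

end bsCycle

end BSCycle

theorem BS12.injective_lift_higman {n : ℕ} (hn : 4 ≤ n) (i : ZMod n) :
    Injective (BS12.lift _ _ (HigmanGroup.bsRel_of i)) := by
  obtain ⟨q, rfl⟩ : ∃ q, n = 1 + q + 2 := ⟨n - 3, by omega⟩
  have hcomp : (bsCycle.ofHigman i).comp (BS12.lift _ _ (HigmanGroup.bsRel_of i)) =
      (bsCycle.inl 1 q).comp (BS12.lift _ _ (bsChain.bsRel_vertex 1 0 zero_le_one)) := by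
    refine BS12.hom_ext ?_ ?_
    · simpa using bsCycle.ofHigman_of_add i (m := 0) (by omega)
    · simpa using bsCycle.ofHigman_of_add i (m := 1) (by omega)
  refine Injective.of_comp (f := bsCycle.ofHigman i) ?_
  rw [← MonoidHom.coe_comp, hcomp, MonoidHom.coe_comp]
  exact (bsCycle.inl_injective le_rfl (by omega)).comp (bsChain.injective_bs12Lift_vertex 1)

theorem bs12_embeds_in_higman (n : ℕ) (hn : 5 ≤ n) (i : ZMod n) :
    ∃ φ : BS12 →* HigmanGroup n,
      φ (PresentedGroup.of 0) = PresentedGroup.of i ∧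
      φ (PresentedGroup.of 1) = PresentedGroup.of (i + 1) ∧
      Function.Injective φ ∧
      Nonempty (BS12 ≃*
        (Subgroup.closure
          {PresentedGroup.of (rels := higmanRels n) i,
           PresentedGroup.of (rels := higmanRels n) (i + 1)} : Subgroup (HigmanGroup n))) := by
  have hφ := BS12.injective_lift_higman (by omega) i
  exact ⟨_, BS12.lift_a _ _ _, BS12.lift_b _ _ _, hφ,
    ⟨(MonoidHom.ofInjective hφ).trans (MulEquiv.subgroupCongr (BS12.range_lift _ _ _))⟩⟩
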